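/- arXiv:2311.04671 — 2 statements merged into one kernel-verified Lean document; each statement's English description precedes it below -/
import Mathlib

section
/- Suppose T : ℂ[X] → ℂ[X] satisfies the Leibniz rule and does not increase degree (deg T(p) ≤ deg p for all nonzero p). Then for each monomial p = Xᴺ (N ≥ 1) there exist constants c, d ∈ ℂ (depending on N) such that T(Xᴺ) = c·(Xᴺ)' + d·Xᴺ. -/
open Polynomial in
theorem leibniz_degree_nonincreasing_monomials (T : Polynomial ℂ → Polynomial ℂ)
    (hT : ∀ p q : Polynomial ℂ, T (p * q) = T p * q + p * T q)
    (hdeg : ∀ p : Polynomial ℂ, p ≠ 0 → (T p).degree ≤ p.degree)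
    (N : ℕ) (hN : 1 ≤ N) :
    ∃ c d : ℂ, T (X ^ N) = C c * Polynomial.derivative (X ^ N : Polynomial ℂ) + C d * X ^ N := by
  have key : ∀ n : ℕ, T (X ^ (n + 1)) = C ((n : ℂ) + 1) * X ^ n * T X := by
    intro n
    induction n with
    | zero => simp
    | succ n ih =>
      have hx : (X : Polynomial ℂ) ^ (n + 2) = X ^ (n + 1) * X := by ring
      rw [hx, hT, ih]
      push_cast
      simp only [Polynomial.C_add, Polynomial.C_1]
      ring
  obtain ⟨a, b, hTX⟩ : ∃ a b : ℂ, T X = C a * X + C b := by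
    refine ⟨(T X).coeff 1, (T X).coeff 0, ?_⟩
    apply Polynomial.eq_X_add_C_of_degree_le_one
    calc (T X).degree ≤ (X : Polynomial ℂ).degree := hdeg X Polynomial.X_ne_zero
      _ = 1 := Polynomial.degree_X
  obtain ⟨m, rfl⟩ : ∃ m, N = m + 1 := ⟨N - 1, (Nat.succ_pred_eq_of_pos hN).symm⟩
  refine ⟨b, a * ((m : ℂ) + 1), ?_⟩
  rw [key m, hTX, Polynomial.derivative_X_pow]
  push_cast
  simp only [Polynomial.C_add, Polynomial.C_1, Polynomial.C_mul]
  ring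
end

section
/- Let f : ℂ → ℕ be any function and q₀ ∈ ℂ[X] a fixed polynomial. Define Q : ℂ[X] → ℂ[X] by Q(p) = 0 for constant p, and for p(z) = a·∏_{j=1}^N (z − z_j) (N ≥ 1) by Q(p) = a·∑_{k=1}^N q₀^{f(z_k)} · ∏_{j≠k} (X − z_j). Then Q is well defined and satisfies the Leibniz rule Q(p·q) = Q(p)·q + p·Q(q) for all p, q ∈ ℂ[X]. -/
/-!
Attach to each linear factor `X - z` of `p = a ∏ (X - z_j)` the dual number
`(X - z) + q₀ ^ f z • ε` over `ℂ[X]`, and let `Φ p = a ∏ ((X - z_j) + q₀ ^ f z_j • ε)`.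
Since roots and leading coefficients are multiplicative, so is `Φ`; its real part is `p` itself
(the field is algebraically closed) and `Q p` is its `ε`-part. The Leibniz rule is the `ε`-part of
`Φ (p * q) = Φ p * Φ q`.
-/

open Polynomial TrivSqZeroExt DualNumber

section DualNumber

variable {S ι : Type*} [CommSemiring S]

theorem DualNumber.fst_prod (s : Finset ι) (x : ι → S[ε]) :
    (∏ j ∈ s, x j).fst = ∏ j ∈ s, (x j).fst :=
  map_prod (fstHom S S S) x s

theorem DualNumber.snd_prod_inl_add_inr [DecidableEq ι] (s : Finset ι) (u v : ι → S) :
    (∏ j ∈ s, (inl (u j) + inr (v j) : S[ε])).snd = ∑ k ∈ s, v k * ∏ j ∈ s.erase k, u j := by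
  induction s using Finset.induction_on with
  | empty => simp
  | insert a s ha ih =>
    rw [Finset.prod_insert ha, DualNumber.snd_mul, ih, DualNumber.fst_prod, Finset.sum_insert ha,
      Finset.erase_insert ha, Finset.mul_sum, add_comm]
    simp only [fst_add, fst_inl, fst_inr, snd_add, snd_inl, snd_inr, add_zero, zero_add]
    congr 1
    refine Finset.sum_congr rfl fun k hk => ?_
    rw [Finset.erase_insert_of_ne (ne_of_mem_of_not_mem hk ha).symm,
      Finset.prod_insert fun h => ha (Finset.mem_of_mem_erase h)]
    ring

end DualNumber

namespace Polynomial

variable {R ι : Type*} [CommRing R] [IsDomain R] (g : R → R[X])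

noncomputable def perturbRoots (p : R[X]) : R[X][ε] :=
  inl (C p.leadingCoeff) * (p.roots.map fun a => inl (X - C a) + inr (g a)).prod

noncomputable def rootSubstitution (p : R[X]) : R[X] :=
  (perturbRoots g p).snd

@[simp]
theorem perturbRoots_zero : perturbRoots g 0 = 0 := by
  simp [perturbRoots]

theorem perturbRoots_mul (p q : R[X]) :
    perturbRoots g (p * q) = perturbRoots g p * perturbRoots g q := by
  rcases eq_or_ne p 0 with rfl | hp
  · simp
  rcases eq_or_ne q 0 with rfl | hq
  · simp
  simp only [perturbRoots, roots_mul (mul_ne_zero hp hq), leadingCoeff_mul, C_mul, inl_mul,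
    Multiset.map_add, Multiset.prod_add]
  exact mul_mul_mul_comm _ _ _ _

theorem fst_perturbRoots {p : R[X]} (hroots : p.roots.card = p.natDegree) :
    (perturbRoots g p).fst = p := by
  rw [perturbRoots, ← fstHom_apply R[X], map_mul, map_multiset_prod, Multiset.map_map]
  simp only [Function.comp_def, fstHom_apply, fst_add, fst_inl, fst_inr, add_zero]
  exact C_leadingCoeff_mul_prod_multiset_X_sub_C hroots

theorem rootSubstitution_C (b : R) : rootSubstitution g (C b) = 0 := by
  simp [rootSubstitution, perturbRoots]

theorem rootSubstitution_C_mul_prod [DecidableEq ι] (a : R) (s : Finset ι) (z : ι → R) :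
    rootSubstitution g (C a * ∏ j ∈ s, (X - C (z j))) =
      C a * ∑ k ∈ s, g (z k) * ∏ j ∈ s.erase k, (X - C (z j)) := by
  rcases eq_or_ne a 0 with rfl | ha
  · simp [rootSubstitution]
  have hmonic : (∏ j ∈ s, (X - C (z j))).Monic :=
    monic_prod_of_monic _ _ fun j _ => monic_X_sub_C _
  have hroots : (C a * ∏ j ∈ s, (X - C (z j))).roots = s.val.map z := by
    rw [roots_C_mul _ ha, Finset.prod_eq_multiset_prod,
      ← roots_multiset_prod_X_sub_C (s.val.map z), Multiset.map_map]
    rfl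
  rw [rootSubstitution, perturbRoots, hroots, leadingCoeff_mul, leadingCoeff_C,
    hmonic.leadingCoeff, mul_one, DualNumber.snd_mul, snd_inl, fst_inl, zero_mul, add_zero,
    Multiset.map_map]
  exact congrArg _ (DualNumber.snd_prod_inl_add_inr s _ _)

theorem rootSubstitution_mul {p q : R[X]} (hp : p.roots.card = p.natDegree)
    (hq : q.roots.card = q.natDegree) :
    rootSubstitution g (p * q) = rootSubstitution g p * q + p * rootSubstitution g q := by
  rw [rootSubstitution, perturbRoots_mul, DualNumber.snd_mul, fst_perturbRoots g hp,
    fst_perturbRoots g hq, rootSubstitution, rootSubstitution, add_comm]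

end Polynomial

open Polynomial in
theorem exists_root_substitution_leibniz (f : ℂ → ℕ) (q₀ : Polynomial ℂ) :
    ∃ Q : Polynomial ℂ → Polynomial ℂ,
      (∀ b : ℂ, Q (C b) = 0) ∧
      (∀ (N : ℕ), 1 ≤ N → ∀ (a : ℂ) (z : Fin N → ℂ),
        Q (C a * ∏ j, (X - C (z j))) =
          C a * ∑ k, q₀ ^ f (z k) * ∏ j ∈ Finset.univ.erase k, (X - C (z j))) ∧
      (∀ p q : Polynomial ℂ, Q (p * q) = Q p * q + p * Q q) :=
  ⟨rootSubstitution fun a => q₀ ^ f a, rootSubstitution_C _,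
    fun _ _ a z => rootSubstitution_C_mul_prod _ a Finset.univ z,
    fun _ _ => rootSubstitution_mul _ IsAlgClosed.card_roots_eq_natDegree
      IsAlgClosed.card_roots_eq_natDegree⟩
end
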